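/- (Pooled IPTW estimating equation unbiasedness) Under consistency, temporal ordering, SRA, positivity, and a correctly specified pooled HRMSM m(t, ā(t-s+1,t), V(t-s+1) | β*) = E[Y_{ā(t-s+1,t)}(t+1) | V(t-s+1)] for all t ∈ 𝒯_s and all regimens, the pooled IPTW estimating function has mean zero at β*: E[ Σ_{t ∈ 𝒯_s} h(t, Ā(t-s+1,t), V(t-s+1)) · (Y(t+1) − m(t, Ā(t-s+1,t), V(t-s+1) | β*)) / ∏_{j=t-s+1}^{t} g(A(j)|Ā(j-1),L̄(j)) ] = 0, for any bounded function h of (t, Ā(t-s+1,t), V(t-s+1)). -/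

import Mathlib

open Finset
open scoped Classical

noncomputable section

def pr {Ω : Type} [Fintype Ω] (μ : Ω → ℝ) (E : Ω → Prop) : ℝ :=
  ∑ ω, if E ω then μ ω else 0

def cpr {Ω : Type} [Fintype Ω] (μ : Ω → ℝ) (E F : Ω → Prop) : ℝ :=
  pr μ (fun ω => E ω ∧ F ω) / pr μ F

def ex {Ω : Type} [Fintype Ω] (μ : Ω → ℝ) (f : Ω → ℝ) : ℝ :=
  ∑ ω, f ω * μ ω

def cex {Ω : Type} [Fintype Ω] (μ : Ω → ℝ) (f : Ω → ℝ) (F : Ω → Prop) : ℝ :=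
  (∑ ω, if F ω then f ω * μ ω else 0) / pr μ F

/-!
Fix `t` and split `Ω` into the strata on which the treatments of the window `[t+1-s, t]` follow
a fixed regimen `b`. On such a stratum consistency turns `Y(t+1)` into the counterfactual
`Y_b(t+1)`, and the inverse propensity weight `∏ 1[A j = b j] / g_j` can be removed one factor at
a time, last treatment first: conditionally on the history at `j`, sequential randomization
makes `A j` independent of the counterfactual process, so `E[1[A j = b j] / g_j · R] = E[R]` for
every `R` determined by that history and the counterfactuals. What is left,
`E[h(t, b, V) (Y_b(t+1) - m(t, b, V))]`, vanishes after conditioning on `V` by the model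
equation, and the pooled statement is the sum over `t`.
-/

section FiniteExpectation

variable {Ω : Type} [Fintype Ω] {μ : Ω → ℝ}

lemma pr_congr {E E' : Ω → Prop} (h : ∀ ω, E ω ↔ E' ω) : pr μ E = pr μ E' := by
  rw [funext fun ω => propext (h ω)]

lemma le_pr (hμ : ∀ ω, 0 ≤ μ ω) {E : Ω → Prop} {ω : Ω} (hω : E ω) : μ ω ≤ pr μ E := by
  have := single_le_sum (f := fun ω => if E ω then μ ω else 0)
    (fun ω _ => by split_ifs <;> simp [hμ ω]) (mem_univ ω)
  simpa [pr, hω] using this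

lemma ex_congr_of_pos (hμ : ∀ ω, 0 ≤ μ ω) {f g : Ω → ℝ} (h : ∀ ω, 0 < μ ω → f ω = g ω) :
    ex μ f = ex μ g := by
  refine sum_congr rfl fun ω _ => ?_
  rcases (hμ ω).eq_or_lt with h0 | hpos
  · simp [← h0]
  · rw [h ω hpos]

lemma ex_finset_sum {ι : Type*} (s : Finset ι) (f : ι → Ω → ℝ) :
    ex μ (fun ω => ∑ i ∈ s, f i ω) = ∑ i ∈ s, ex μ (f i) := by
  simp only [ex, sum_mul]
  exact sum_comm

lemma cex_eq_ex_ite_div (f : Ω → ℝ) (E : Ω → Prop) [DecidablePred E] :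
    cex μ f E = ex μ (fun ω => if E ω then f ω else 0) / pr μ E := by
  refine congrArg (· / pr μ E) (sum_congr rfl fun ω _ => ?_)
  by_cases hE : E ω <;> simp [hE]

lemma cex_congr {f g : Ω → ℝ} {E : Ω → Prop} (h : ∀ ω, E ω → f ω = g ω) :
    cex μ f E = cex μ g E := by
  refine congrArg (· / pr μ E) (sum_congr rfl fun ω _ => ?_)
  split_ifs with hω
  · rw [h ω hω]
  · rfl

lemma cex_ite_const (c : ℝ) (T E : Ω → Prop) :
    cex μ (fun ω => if T ω then c else 0) E = c * cpr μ T E := by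
  simp only [cex, cpr, pr, mul_div_assoc', mul_sum]
  congr 1
  refine sum_congr rfl fun ω _ => ?_
  by_cases hT : T ω <;> by_cases hE : E ω <;> simp [hT, hE]

lemma cex_const_mul_sub_const {E : Ω → Prop} (hE : pr μ E ≠ 0) (c d : ℝ) (f : Ω → ℝ) :
    cex μ (fun ω => c * (f ω - d)) E = c * (cex μ f E - d) := by
  have hsplit : ∑ ω, (if E ω then c * (f ω - d) * μ ω else 0)
      = c * ((∑ ω, if E ω then f ω * μ ω else 0) - d * pr μ E) := by
    simp only [pr, mul_sum, ← sum_sub_distrib]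
    refine sum_congr rfl fun ω _ => ?_
    split_ifs <;> ring
  simp only [cex, hsplit]
  field_simp

end FiniteExpectation

lemma Equivalence.class_eq {α : Sort*} {r : α → α → Prop} (hr : Equivalence r) {a b : α}
    (h : r a b) : (fun x => r x a) = (fun x => r x b) :=
  funext fun _ => propext ⟨fun hx => hr.trans hx h, fun hx => hr.trans hx (hr.symm h)⟩

section Tower

variable {Ω : Type} [Fintype Ω] {μ : Ω → ℝ} {r : Ω → Ω → Prop}

theorem ex_cex (hμ : ∀ ω, 0 ≤ μ ω) (hr : Equivalence r) (F : Ω → ℝ) :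
    ex μ (fun ω => cex μ F (fun ω' => r ω' ω)) = ex μ F := by
  unfold ex cex
  calc ∑ ω, (∑ ω', if r ω' ω then F ω' * μ ω' else 0) / pr μ (fun x => r x ω) * μ ω
      = ∑ ω, ∑ ω', if r ω' ω then F ω' * μ ω' * μ ω / pr μ (fun x => r x ω') else 0 := by
        refine sum_congr rfl fun ω _ => ?_
        rw [div_mul_eq_mul_div, sum_mul, sum_div]
        refine sum_congr rfl fun ω' _ => ?_
        split_ifs with h
        · rw [hr.class_eq h]
        · simp
    _ = ∑ ω', F ω' * μ ω' * pr μ (fun x => r x ω') / pr μ (fun x => r x ω') := by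
        rw [sum_comm]
        refine sum_congr rfl fun ω' _ => ?_
        simp only [pr, mul_sum, sum_div]
        refine sum_congr rfl fun ω _ => ?_
        by_cases h : r ω' ω
        · simp [h, hr.symm h]
        · have h' : ¬r ω ω' := fun h' => h (hr.symm h')
          simp [h, h']
    _ = ∑ ω', F ω' * μ ω' := by
        refine sum_congr rfl fun ω' _ => ?_
        rcases (hμ ω').eq_or_lt with h0 | hpos
        · simp [← h0]
        · have hclass : 0 < pr μ (fun x => r x ω') := hpos.trans_le (le_pr hμ (hr.refl ω'))
          rw [mul_div_cancel_right₀ _ hclass.ne']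

lemma ex_eq_zero_of_cex_eq_zero (hμ : ∀ ω, 0 ≤ μ ω) (hr : Equivalence r) {F : Ω → ℝ}
    (h : ∀ ω, 0 < pr μ (fun ω' => r ω' ω) → cex μ F (fun ω' => r ω' ω) = 0) :
    ex μ F = 0 :=
  calc ex μ F = ex μ (fun ω => cex μ F (fun ω' => r ω' ω)) := (ex_cex hμ hr F).symm
    _ = ex μ (fun _ => 0) :=
        ex_congr_of_pos hμ fun ω hω => h ω (hω.trans_le (le_pr hμ (hr.refl ω)))
    _ = 0 := by simp [ex]

end Tower

def CondIndep {Ω : Type} {𝒜 ζ : Type*} [Fintype Ω] (μ : Ω → ℝ) (T : Ω → 𝒜) (Z : Ω → ζ)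
    (r : Ω → Ω → Prop) : Prop :=
  ∀ (ω : Ω) (a : 𝒜) (z : ζ), 0 < pr μ (fun ω' => r ω' ω) →
    cpr μ (fun ω' => T ω' = a ∧ Z ω' = z) (fun ω' => r ω' ω) =
      cpr μ (fun ω' => T ω' = a) (fun ω' => r ω' ω) *
        cpr μ (fun ω' => Z ω' = z) (fun ω' => r ω' ω)

section CondIndep

variable {Ω : Type} [Fintype Ω] {μ : Ω → ℝ} {𝒜 ζ : Type*} {r : Ω → Ω → Prop}
  {T : Ω → 𝒜} {Z : Ω → ζ}

lemma CondIndep.cpr_and_eq (hCI : CondIndep μ T Z r) {ω : Ω} (a : 𝒜) (z : ζ)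
    (hclass : 0 < pr μ (fun ω' => r ω' ω)) (hz : 0 < pr μ (fun ω' => r ω' ω ∧ Z ω' = z)) :
    cpr μ (fun ω' => T ω' = a) (fun ω' => r ω' ω ∧ Z ω' = z) =
      cpr μ (fun ω' => T ω' = a) (fun ω' => r ω' ω) := by
  have h := hCI ω a z hclass
  have e1 : pr μ (fun ω' => T ω' = a ∧ r ω' ω ∧ Z ω' = z) =
      pr μ (fun ω' => (T ω' = a ∧ Z ω' = z) ∧ r ω' ω) := pr_congr fun _ => by tauto
  have e2 : pr μ (fun ω' => r ω' ω ∧ Z ω' = z) = pr μ (fun ω' => Z ω' = z ∧ r ω' ω) :=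
    pr_congr fun _ => and_comm
  simp only [cpr] at h ⊢
  rw [e1, e2]
  rw [e2] at hz
  field_simp at h ⊢
  linear_combination h

theorem ex_ite_inv_mul (hμ : ∀ ω, 0 ≤ μ ω) (hr : Equivalence r) {a : 𝒜}
    (hCI : CondIndep μ T Z r)
    (hpos : ∀ ω, 0 < μ ω → 0 < cpr μ (fun ω' => T ω' = a) (fun ω' => r ω' ω))
    {R : Ω → ℝ} (hR : ∀ ω ω', r ω ω' → Z ω = Z ω' → R ω = R ω') :
    ex μ (fun ω => (if T ω = a then (cpr μ (fun ω' => T ω' = a) (fun ω' => r ω' ω))⁻¹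
      else 0) * R ω) = ex μ R := by
  have hs : Equivalence fun ω ω' => r ω ω' ∧ Z ω = Z ω' :=
    ⟨fun ω => ⟨hr.refl ω, rfl⟩, fun h => ⟨hr.symm h.1, h.2.symm⟩,
      fun h h' => ⟨hr.trans h.1 h'.1, h.2.trans h'.2⟩⟩
  rw [← ex_cex hμ hs]
  refine ex_congr_of_pos hμ fun ω hω => ?_
  have hclass : 0 < pr μ (fun ω' => r ω' ω) := hω.trans_le (le_pr hμ (hr.refl ω))
  have hstratum : 0 < pr μ (fun ω' => r ω' ω ∧ Z ω' = Z ω) :=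
    hω.trans_le (le_pr hμ (hs.refl ω))
  calc cex μ _ (fun ω' => r ω' ω ∧ Z ω' = Z ω)
      = cex μ (fun ω' => if T ω' = a then
            (cpr μ (fun ω' => T ω' = a) (fun ω' => r ω' ω))⁻¹ * R ω else 0)
          (fun ω' => r ω' ω ∧ Z ω' = Z ω) := by
        refine cex_congr fun ω' h => ?_
        rw [hr.class_eq h.1, hR ω' ω h.1 h.2]
        split_ifs <;> simp
    _ = (cpr μ (fun ω' => T ω' = a) (fun ω' => r ω' ω))⁻¹ * R ω *
          cpr μ (fun ω' => T ω' = a) (fun ω' => r ω' ω ∧ Z ω' = Z ω) :=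
        cex_ite_const _ _ _
    _ = R ω := by
        rw [hCI.cpr_and_eq a (Z ω) hclass hstratum]
        field_simp [(hpos ω hω).ne']

end CondIndep

def SameHistory {Ω 𝒜 ℒ : Type*} (A : ℕ → Ω → 𝒜) (L : ℕ → Ω → ℒ) (j : ℕ) (ω ω' : Ω) :
    Prop :=
  (∀ i < j, A i ω = A i ω') ∧ (∀ i ≤ j, L i ω = L i ω')

def propensity {Ω : Type} [Fintype Ω] {𝒜 ℒ : Type*} (μ : Ω → ℝ) (A : ℕ → Ω → 𝒜)
    (L : ℕ → Ω → ℒ) (j : ℕ) (a : 𝒜) (ω : Ω) : ℝ :=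
  cpr μ (fun ω' => A j ω' = a) (fun ω' => SameHistory A L j ω' ω)

def ipwWeight {Ω : Type} [Fintype Ω] {𝒜 ℒ : Type*} (μ : Ω → ℝ) (A : ℕ → Ω → 𝒜)
    (L : ℕ → Ω → ℒ) (b : ℕ → 𝒜) (S : Finset ℕ) (ω : Ω) : ℝ :=
  ∏ i ∈ S, if A i ω = b i then (propensity μ A L i (b i) ω)⁻¹ else 0

section Longitudinal

variable {Ω : Type} {𝒜 ℒ : Type*} {A : ℕ → Ω → 𝒜} {L : ℕ → Ω → ℒ}

lemma SameHistory.equivalence (j : ℕ) : Equivalence (SameHistory A L j) :=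
  ⟨fun _ => ⟨fun _ _ => rfl, fun _ _ => rfl⟩,
    fun h => ⟨fun i hi => (h.1 i hi).symm, fun i hi => (h.2 i hi).symm⟩,
    fun h h' => ⟨fun i hi => (h.1 i hi).trans (h'.1 i hi),
      fun i hi => (h.2 i hi).trans (h'.2 i hi)⟩⟩

lemma SameHistory.mono {i j : ℕ} {ω ω' : Ω} (hij : i ≤ j) (h : SameHistory A L j ω ω') :
    SameHistory A L i ω ω' :=
  ⟨fun k hk => h.1 k (hk.trans_le hij), fun k hk => h.2 k (hk.trans hij)⟩

variable [Fintype Ω] {μ : Ω → ℝ} {b : ℕ → 𝒜} {S : Finset ℕ} {ω ω' : Ω}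

lemma propensity_congr {j : ℕ} {a : 𝒜} (h : SameHistory A L j ω ω') :
    propensity μ A L j a ω = propensity μ A L j a ω' := by
  rw [propensity, (SameHistory.equivalence j).class_eq h, propensity]

lemma ipwWeight_congr {n : ℕ} (hS : ∀ i ∈ S, i < n) (h : SameHistory A L n ω ω') :
    ipwWeight μ A L b S ω = ipwWeight μ A L b S ω' :=
  prod_congr rfl fun i hi => by
    rw [h.1 i (hS i hi), propensity_congr (h.mono (hS i hi).le)]

lemma ipwWeight_of_forall_eq (h : ∀ i ∈ S, A i ω = b i) :
    ipwWeight μ A L b S ω = (∏ i ∈ S, propensity μ A L i (A i ω) ω)⁻¹ := by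
  rw [ipwWeight, ← prod_inv_distrib]
  exact prod_congr rfl fun i hi => by rw [if_pos (h i hi), h i hi]

lemma ipwWeight_of_exists_ne (h : ∃ i ∈ S, A i ω ≠ b i) : ipwWeight μ A L b S ω = 0 := by
  obtain ⟨i, hi, hne⟩ := h
  exact prod_eq_zero hi (if_neg hne)

theorem ex_ipwWeight_mul {ζ : Type*} (hμ : ∀ ω, 0 ≤ μ ω) (Z : Ω → ζ) {r n : ℕ} (hrn : r ≤ n)
    (hCI : ∀ j ∈ Ico r n, CondIndep μ (A j) Z (SameHistory A L j))
    (hpos : ∀ j ∈ Ico r n, ∀ ω, 0 < μ ω → 0 < propensity μ A L j (b j) ω)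
    {q : Ω → ℝ} (hq : ∀ ω ω', SameHistory A L r ω ω' → Z ω = Z ω' → q ω = q ω') :
    ex μ (fun ω => ipwWeight μ A L b (Ico r n) ω * q ω) = ex μ q := by
  induction n, hrn using Nat.le_induction with
  | base => simp [ipwWeight]
  | succ n hrn ih =>
    have hsucc : ∀ j ∈ Ico r n, j ∈ Ico r (n + 1) := fun j hj =>
      Ico_subset_Ico_right n.le_succ hj
    have hn : n ∈ Ico r (n + 1) := mem_Ico.2 ⟨hrn, n.lt_succ_self⟩
    have hpeel : ∀ ω, ipwWeight μ A L b (Ico r (n + 1)) ω * q ω =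
        (if A n ω = b n then (propensity μ A L n (b n) ω)⁻¹ else 0) *
          (ipwWeight μ A L b (Ico r n) ω * q ω) := fun ω => by
      rw [ipwWeight, prod_Ico_succ_top hrn, ← ipwWeight]
      ring
    rw [funext hpeel, ← ih (fun j hj => hCI j (hsucc j hj)) fun j hj => hpos j (hsucc j hj)]
    refine ex_ite_inv_mul hμ (SameHistory.equivalence n) (hCI n hn) (hpos n hn)
      fun ω ω' h hZ => ?_
    rw [ipwWeight_congr (fun i hi => (mem_Ico.1 hi).2) h, hq ω ω' (h.mono hrn) hZ]

end Longitudinal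

theorem ex_mul_sub_cex_eq_zero {Ω : Type} [Fintype Ω] {𝒱 : Type*} {μ : Ω → ℝ}
    (hμ : ∀ ω, 0 ≤ μ ω) (V : Ω → 𝒱) (f : Ω → ℝ) (c m : 𝒱 → ℝ)
    (hm : ∀ v, 0 < pr μ (fun ω => V ω = v) → cex μ f (fun ω => V ω = v) = m v) :
    ex μ (fun ω => c (V ω) * (f ω - m (V ω))) = 0 := by
  refine ex_eq_zero_of_cex_eq_zero hμ (eq_equivalence.comap V) fun ω hω => ?_
  rw [cex_congr (g := fun ω' => c (V ω) * (f ω' - m (V ω))) fun ω' h => by rw [h],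
    cex_const_mul_sub_const hω.ne', hm _ hω, sub_self, mul_zero]

lemma eq_counterfactual_of_agree {Ω 𝒜 ℒ : Type*} {A : ℕ → Ω → 𝒜} {CL : (ℕ → 𝒜) → ℕ → Ω → ℒ}
    {L : ℕ → Ω → ℒ}
    (hTO : ∀ (a a' : ℕ → 𝒜) (j : ℕ), (∀ i < j, a i = a' i) → ∀ ω, CL a j ω = CL a' j ω)
    (hcons : ∀ j ω, L j ω = CL (fun i => A i ω) j ω) {r n : ℕ} {b : ℕ → 𝒜} {ω : Ω}
    (h : ∀ i ∈ Ico r n, A i ω = b i) :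
    L n ω = CL (fun i => if i < r then A i ω else b i) n ω := by
  rw [hcons]
  refine hTO _ _ n (fun i hi => ?_) ω
  split_ifs with hir
  · rfl
  · exact h i (mem_Ico.2 ⟨not_lt.1 hir, hi⟩)

theorem ex_iptw_residual_eq_zero {Ω : Type} {𝒜 ℒ 𝒱 : Type*} [Fintype Ω] {μ : Ω → ℝ}
    {A : ℕ → Ω → 𝒜} {CL : (ℕ → 𝒜) → ℕ → Ω → ℒ} {L : ℕ → Ω → ℒ} (Y : ℒ → ℝ)
    (hμ : ∀ ω, 0 ≤ μ ω)
    (hTO : ∀ (a a' : ℕ → 𝒜) (j : ℕ), (∀ i < j, a i = a' i) → ∀ ω, CL a j ω = CL a' j ω)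
    (hcons : ∀ j ω, L j ω = CL (fun i => A i ω) j ω) {r t : ℕ} (hrt : r ≤ t + 1)
    (hCI : ∀ j ∈ Ico r (t + 1),
      CondIndep μ (A j) (fun ω ar jj => CL ar jj ω) (SameHistory A L j))
    (hpos : ∀ j ∈ Ico r (t + 1), ∀ a ω, 0 < μ ω → 0 < propensity μ A L j a ω)
    (V : Ω → 𝒱) (hV : ∀ ω ω', SameHistory A L r ω ω' → V ω = V ω')
    (m h : (ℕ → 𝒜) → 𝒱 → ℝ)
    (hm : ∀ (a a' : ℕ → 𝒜) (v : 𝒱), (∀ i, r ≤ i → i ≤ t → a i = a' i) → m a v = m a' v)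
    (hh : ∀ (a a' : ℕ → 𝒜) (v : 𝒱), (∀ i, r ≤ i → i ≤ t → a i = a' i) → h a v = h a' v)
    (hmodel : ∀ (b : ℕ → 𝒜) (v : 𝒱), 0 < pr μ (fun ω => V ω = v) →
      cex μ (fun ω => Y (CL (fun i => if i < r then A i ω else b i) (t + 1) ω))
        (fun ω => V ω = v) = m b v) :
    ex μ (fun ω => h (fun i => A i ω) (V ω) * (Y (L (t + 1) ω) - m (fun i => A i ω) (V ω)) /
      ∏ j ∈ Ico r (t + 1), propensity μ A L j (A j ω) ω) = 0 := by
  have hstrata : Equivalence fun ω ω' => ∀ i ∈ Ico r (t + 1), A i ω = A i ω' :=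
    ⟨fun _ _ _ => rfl, fun h i hi => (h i hi).symm, fun h h' i hi => (h i hi).trans (h' i hi)⟩
  refine ex_eq_zero_of_cex_eq_zero hμ hstrata fun ω₀ _ => ?_
  set b : ℕ → 𝒜 := fun i => A i ω₀
  set Yb : Ω → ℝ := fun ω => Y (CL (fun i => if i < r then A i ω else b i) (t + 1) ω)
  have hobs : ∀ ω, (if ∀ i ∈ Ico r (t + 1), A i ω = b i then
      h (fun i => A i ω) (V ω) * (Y (L (t + 1) ω) - m (fun i => A i ω) (V ω)) /
        ∏ j ∈ Ico r (t + 1), propensity μ A L j (A j ω) ω else 0) =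
      ipwWeight μ A L b (Ico r (t + 1)) ω * (h b (V ω) * (Yb ω - m b (V ω))) := fun ω => by
    split_ifs with hb
    · have hagree : ∀ i, r ≤ i → i ≤ t → A i ω = b i := fun i hi hi' =>
        hb i (mem_Ico.2 ⟨hi, Nat.lt_succ_of_le hi'⟩)
      rw [ipwWeight_of_forall_eq hb, hh _ b _ hagree, hm _ b _ hagree,
        eq_counterfactual_of_agree hTO hcons hb, div_eq_inv_mul]
    · push Not at hb
      rw [ipwWeight_of_exists_ne hb, zero_mul]
  have hcf : ∀ ω ω', SameHistory A L r ω ω' →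
      (fun ar jj => CL ar jj ω) = (fun ar jj => CL ar jj ω') → Yb ω = Yb ω' := by
    intro ω ω' hω hZ
    have hsplice : (fun i => if i < r then A i ω else b i) =
        fun i => if i < r then A i ω' else b i :=
      funext fun i => by split_ifs with hi; exacts [hω.1 i hi, rfl]
    simp only [Yb, hsplice]
    exact congrArg Y (congrFun (congrFun hZ _) _)
  rw [cex_eq_ex_ite_div, div_eq_zero_iff]
  left
  calc ex μ _ = ex μ (fun ω => ipwWeight μ A L b (Ico r (t + 1)) ω *
        (h b (V ω) * (Yb ω - m b (V ω)))) := congrArg (ex μ) (funext hobs)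
    _ = ex μ (fun ω => h b (V ω) * (Yb ω - m b (V ω))) :=
        ex_ipwWeight_mul hμ _ hrt hCI (fun j hj => hpos j hj (b j))
          fun ω ω' hω hZ => by rw [hV ω ω' hω, hcf ω ω' hω hZ]
    _ = 0 := ex_mul_sub_cex_eq_zero hμ V Yb (h b) (m b) (hmodel b)

theorem hrmsm_pooled_iptw_unbiased_general
    {Ω 𝒜 ℒ 𝒱 : Type} [Fintype Ω]
    (μ : Ω → ℝ) (hμ : ∀ ω, 0 ≤ μ ω)
    (K s : ℕ)
    (A : ℕ → Ω → 𝒜) (CL : (ℕ → 𝒜) → ℕ → Ω → ℒ) (L : ℕ → Ω → ℒ) (Y : ℒ → ℝ)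
    (hTO : ∀ (a a' : ℕ → 𝒜) (j : ℕ), (∀ i < j, a i = a' i) → ∀ ω, CL a j ω = CL a' j ω)
    (hcons : ∀ j ω, L j ω = CL (fun i => A i ω) j ω)
    (SRA : ∀ j ≤ K, ∀ (a : 𝒜) (x : (ℕ → 𝒜) → ℕ → ℒ) (ab : ℕ → 𝒜) (lb : ℕ → ℒ),
      pr μ (fun ω => (∀ i < j, A i ω = ab i) ∧ (∀ i ≤ j, L i ω = lb i)) > 0 →
      cpr μ (fun ω => A j ω = a ∧ ∀ (ar : ℕ → 𝒜) (jj : ℕ), CL ar jj ω = x ar jj)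
        (fun ω => (∀ i < j, A i ω = ab i) ∧ (∀ i ≤ j, L i ω = lb i)) =
      cpr μ (fun ω => A j ω = a)
        (fun ω => (∀ i < j, A i ω = ab i) ∧ (∀ i ≤ j, L i ω = lb i)) *
      cpr μ (fun ω => ∀ (ar : ℕ → 𝒜) (jj : ℕ), CL ar jj ω = x ar jj)
        (fun ω => (∀ i < j, A i ω = ab i) ∧ (∀ i ≤ j, L i ω = lb i)))
    (POS : ∀ j ≤ K, ∀ (a : 𝒜) (ω : Ω), μ ω > 0 →
      cpr μ (fun ω' => A j ω' = a)
        (fun ω' => (∀ i < j, A i ω' = A i ω) ∧ (∀ i ≤ j, L i ω' = L i ω)) > 0)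
    (Ts : Finset ℕ) (hTs : ∀ t ∈ Ts, s - 1 ≤ t ∧ t ≤ K)
    (V : ℕ → Ω → 𝒱)
    (hV : ∀ t ∈ Ts, ∀ ω ω', (∀ i < t + 1 - s, A i ω = A i ω') →
      (∀ i ≤ t + 1 - s, L i ω = L i ω') → V t ω = V t ω')
    (m : ℕ → (ℕ → 𝒜) → 𝒱 → ℝ)
    (hm : ∀ t ∈ Ts, ∀ (a a' : ℕ → 𝒜) (v : 𝒱),
      (∀ i, t + 1 - s ≤ i → i ≤ t → a i = a' i) → m t a v = m t a' v)
    (hmodel : ∀ t ∈ Ts, ∀ (ab : ℕ → 𝒜) (v : 𝒱), pr μ (fun ω => V t ω = v) > 0 →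
      cex μ (fun ω => Y (CL (fun i => if i < t + 1 - s then A i ω else ab i) (t + 1) ω))
        (fun ω => V t ω = v) = m t ab v)
    (h : ℕ → (ℕ → 𝒜) → 𝒱 → ℝ)
    (hh : ∀ t ∈ Ts, ∀ (a a' : ℕ → 𝒜) (v : 𝒱),
      (∀ i, t + 1 - s ≤ i → i ≤ t → a i = a' i) → h t a v = h t a' v) :
    ex μ (fun ω => ∑ t ∈ Ts,
      h t (fun i => A i ω) (V t ω) *
      (Y (L (t + 1) ω) - m t (fun i => A i ω) (V t ω)) /
      ∏ j ∈ Finset.Ico (t + 1 - s) (t + 1),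
        cpr μ (fun ω' => A j ω' = A j ω)
          (fun ω' => (∀ i < j, A i ω' = A i ω) ∧ (∀ i ≤ j, L i ω' = L i ω))) = 0 := by
  rw [ex_finset_sum]
  refine sum_eq_zero fun t ht => ?_
  have hK : ∀ j ∈ Ico (t + 1 - s) (t + 1), j ≤ K := fun j hj =>
    Nat.le_of_lt_succ ((mem_Ico.1 hj).2.trans_le (Nat.succ_le_succ (hTs t ht).2))
  exact ex_iptw_residual_eq_zero Y hμ hTO hcons (Nat.sub_le _ _)
    (fun j hj ω a z hpos => by
      simpa only [SameHistory, funext_iff] using SRA j (hK j hj) a z _ _ hpos)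
    (fun j hj => POS j (hK j hj)) (V t) (fun ω ω' hω => hV t ht ω ω' hω.1 hω.2)
    (m t) (h t) (hm t ht) (hh t ht) (hmodel t ht)

/-- unbiasedness of the pooled IPTW estimating function for a
correctly specified pooled HRMSM over the time points `t ∈ 𝒯ₛ`. -/
theorem hrmsm_pooled_iptw_unbiased
    {Ω 𝒜 ℒ 𝒱 : Type} [Fintype Ω]
    (μ : Ω → ℝ) (hμ : ∀ ω, 0 ≤ μ ω) (hsum : ∑ ω, μ ω = 1)
    (K s : ℕ) (hs : 1 ≤ s) (hsK : s ≤ K + 1)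
    (A : ℕ → Ω → 𝒜) (CL : (ℕ → 𝒜) → ℕ → Ω → ℒ) (L : ℕ → Ω → ℒ) (Y : ℒ → ℝ)
    (hTO : ∀ (a a' : ℕ → 𝒜) (j : ℕ), (∀ i < j, a i = a' i) → ∀ ω, CL a j ω = CL a' j ω)
    (hcons : ∀ j ω, L j ω = CL (fun i => A i ω) j ω)
    (SRA : ∀ j ≤ K, ∀ (a : 𝒜) (x : (ℕ → 𝒜) → ℕ → ℒ) (ab : ℕ → 𝒜) (lb : ℕ → ℒ),
      pr μ (fun ω => (∀ i < j, A i ω = ab i) ∧ (∀ i ≤ j, L i ω = lb i)) > 0 →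
      cpr μ (fun ω => A j ω = a ∧ ∀ (ar : ℕ → 𝒜) (jj : ℕ), CL ar jj ω = x ar jj)
        (fun ω => (∀ i < j, A i ω = ab i) ∧ (∀ i ≤ j, L i ω = lb i)) =
      cpr μ (fun ω => A j ω = a)
        (fun ω => (∀ i < j, A i ω = ab i) ∧ (∀ i ≤ j, L i ω = lb i)) *
      cpr μ (fun ω => ∀ (ar : ℕ → 𝒜) (jj : ℕ), CL ar jj ω = x ar jj)
        (fun ω => (∀ i < j, A i ω = ab i) ∧ (∀ i ≤ j, L i ω = lb i)))
    (POS : ∀ j ≤ K, ∀ (a : 𝒜) (ω : Ω), μ ω > 0 →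
      cpr μ (fun ω' => A j ω' = a)
        (fun ω' => (∀ i < j, A i ω' = A i ω) ∧ (∀ i ≤ j, L i ω' = L i ω)) > 0)
    (Ts : Finset ℕ) (hTs : ∀ t ∈ Ts, s - 1 ≤ t ∧ t ≤ K)
    (V : ℕ → Ω → 𝒱)
    (hV : ∀ t ∈ Ts, ∀ ω ω', (∀ i < t + 1 - s, A i ω = A i ω') →
      (∀ i ≤ t + 1 - s, L i ω = L i ω') → V t ω = V t ω')
    (m : ℕ → (ℕ → 𝒜) → 𝒱 → ℝ)
    (hm : ∀ t ∈ Ts, ∀ (a a' : ℕ → 𝒜) (v : 𝒱),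
      (∀ i, t + 1 - s ≤ i → i ≤ t → a i = a' i) → m t a v = m t a' v)
    (hmodel : ∀ t ∈ Ts, ∀ (ab : ℕ → 𝒜) (v : 𝒱), pr μ (fun ω => V t ω = v) > 0 →
      cex μ (fun ω => Y (CL (fun i => if i < t + 1 - s then A i ω else ab i) (t + 1) ω))
        (fun ω => V t ω = v) = m t ab v)
    (h : ℕ → (ℕ → 𝒜) → 𝒱 → ℝ)
    (hh : ∀ t ∈ Ts, ∀ (a a' : ℕ → 𝒜) (v : 𝒱),
      (∀ i, t + 1 - s ≤ i → i ≤ t → a i = a' i) → h t a v = h t a' v) :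
    ex μ (fun ω => ∑ t ∈ Ts,
      h t (fun i => A i ω) (V t ω) *
      (Y (L (t + 1) ω) - m t (fun i => A i ω) (V t ω)) /
      ∏ j ∈ Finset.Ico (t + 1 - s) (t + 1),
        cpr μ (fun ω' => A j ω' = A j ω)
          (fun ω' => (∀ i < j, A i ω' = A i ω) ∧ (∀ i ≤ j, L i ω' = L i ω))) = 0 :=
  hrmsm_pooled_iptw_unbiased_general μ hμ K s A CL L Y hTO hcons SRA POS Ts hTs V hV m hm hmodel h
    hh
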